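/- Let G be a finite group and let k and K be fields of the same characteristic. Then β_k(G) = β_K(G); that is, for fields the invariant β_k(G) depends only on the characteristic of k. -/

import Mathlib

/-- `beta`: see above. -/
noncomputable def beta {A : Type*} [CommRing A] (𝒜 : ℕ → Set A) (B : Subring A) : ℕ∞ :=
  sInf ((↑) '' {n : ℕ | B ≤ Subring.closure {a : A | a ∈ B ∧ ∃ d ≤ n, a ∈ 𝒜 d}})

/-- An `ℕ`-graded commutative `k`-algebra equipped with an action of `G` by
degree-preserving `k`-algebra automorphisms. -/
structure GradedAlgebraWithAction (k : Type) [CommRing k] (G : Type) [Group G] :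
    Type 1 where
  carrier : Type
  [commRing : CommRing carrier]
  [algebra : Algebra k carrier]
  grading : ℕ → Submodule k carrier
  graded : GradedAlgebra grading
  action : G →* (carrier ≃ₐ[k] carrier)
  degPres : ∀ (g : G) (d : ℕ), ∀ a ∈ grading d, action g a ∈ grading d

attribute [instance] GradedAlgebraWithAction.commRing GradedAlgebraWithAction.algebra

namespace GradedAlgebraWithAction

variable {k G : Type} [CommRing k] [Group G] (X : GradedAlgebraWithAction k G)

/-- The invariant subring `A^G`. -/
def inv : Subring X.carrier where
  carrier := {a : X.carrier | ∀ g : G, X.action g a = a}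
  mul_mem' := by intro a b ha hb g; rw [map_mul, ha g, hb g]
  one_mem' := fun g => map_one (X.action g)
  add_mem' := by intro a b ha hb g; rw [map_add, ha g, hb g]
  zero_mem' := fun g => map_zero (X.action g)
  neg_mem' := by intro a ha g; rw [map_neg, ha g]

/-- The invariant subring fixed by a subgroup `H ≤ G`. -/
def invSub (H : Subgroup G) : Subring X.carrier where
  carrier := {a : X.carrier | ∀ g ∈ H, X.action g a = a}
  mul_mem' := by intro a b ha hb g hg; rw [map_mul, ha g hg, hb g hg]
  one_mem' := fun g _ => map_one (X.action g)
  add_mem' := by intro a b ha hb g hg; rw [map_add, ha g hg, hb g hg]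
  zero_mem' := fun g _ => map_zero (X.action g)
  neg_mem' := by intro a ha g hg; rw [map_neg, ha g hg]

/-- `β(A)` of the underlying graded algebra. -/
noncomputable def betaTop : ℕ∞ := beta (fun d => (X.grading d : Set X.carrier)) ⊤

/-- `β(A^G)` for the induced grading on the invariant ring. -/
noncomputable def betaInv : ℕ∞ := beta (fun d => (X.grading d : Set X.carrier)) X.inv

end GradedAlgebraWithAction

/-- `β_k(G)`: the supremum of `β(A^G)` over all `ℕ`-graded commutative `k`-algebras `A`
with an action of `G` by degree-preserving `k`-algebra automorphisms and `β(A) ≤ 1`. -/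
noncomputable def betaRing (k : Type) [CommRing k] (G : Type) [Group G] : ℕ∞ :=
  ⨆ (X : GradedAlgebraWithAction k G) (_ : X.betaTop ≤ 1), X.betaInv


/-!
Every field contains its prime field `F` (`ZMod p` or `ℚ`), so it suffices to show
`β_k(G) = β_F(G)` for every field extension `k / F`. Restriction of scalars turns a graded
`k`-algebra with `G`-action into an `F`-algebra without changing the rings `A` and `A^G`, so
`β_k(G) ≤ β_F(G)`. Conversely, `A ↦ k ⊗[F] A` preserves `β(A) ≤ 1`. Taking coordinates in an
`F`-basis of `k` commutes with the action, so the homogeneous invariants of `k ⊗[F] A` are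
spanned by those of `A`; if they generate in degrees `≤ n`, then `1 ⊗ b` lies in the base change
of the `F`-algebra generated by invariants of `A` of degree `≤ n` for each `b ∈ A^G`, and
faithful flatness of `k` over `F` brings `b` back into that algebra. Hence
`β(A^G) ≤ β((k ⊗[F] A)^G)` and `β_F(G) ≤ β_k(G)`.
-/

open TensorProduct

section Beta

variable {A : Type*} [CommRing A]

def GeneratedInDegreesLE (𝒜 : ℕ → Set A) (B : Subring A) (n : ℕ) : Prop :=
  B ≤ Subring.closure {a | a ∈ B ∧ ∃ d ≤ n, a ∈ 𝒜 d}

theorem GeneratedInDegreesLE.mono {𝒜 : ℕ → Set A} {B : Subring A} {m n : ℕ} (hmn : m ≤ n)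
    (h : GeneratedInDegreesLE 𝒜 B m) : GeneratedInDegreesLE 𝒜 B n :=
  h.trans <| Subring.closure_mono fun _ ⟨ha, d, hd, had⟩ => ⟨ha, d, hd.trans hmn, had⟩

theorem beta_le_coe_iff {𝒜 : ℕ → Set A} {B : Subring A} {n : ℕ} :
    beta 𝒜 B ≤ n ↔ GeneratedInDegreesLE 𝒜 B n := by
  refine ⟨fun h => ?_, fun h => sInf_le ⟨n, h, rfl⟩⟩
  obtain ⟨m, hm, hmn⟩ : beta 𝒜 B ∈ (↑) '' {m | GeneratedInDegreesLE 𝒜 B m} := by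
    refine csInf_mem (Set.nonempty_iff_ne_empty.2 fun hempty => ?_)
    change sInf (((↑) : ℕ → ℕ∞) '' {m | GeneratedInDegreesLE 𝒜 B m}) ≤ _ at h
    simp [hempty] at h
  exact hm.mono (by exact_mod_cast hmn.trans_le h)

theorem beta_le_beta {A' : Type*} [CommRing A'] {𝒜 : ℕ → Set A} {B : Subring A}
    {𝒜' : ℕ → Set A'} {B' : Subring A'}
    (h : ∀ n, GeneratedInDegreesLE 𝒜' B' n → GeneratedInDegreesLE 𝒜 B n) :
    beta 𝒜 B ≤ beta 𝒜' B' :=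
  sInf_le_sInf (Set.image_mono h)

end Beta

theorem LinearMap.baseChange_apply_mem_baseChange {R A M N : Type*} [CommSemiring R]
    [CommSemiring A] [Algebra R A] [AddCommMonoid M] [Module R M] [AddCommMonoid N] [Module R N]
    {p : Submodule R M} {q : Submodule R N} {f : M →ₗ[R] N} (hf : ∀ m ∈ p, f m ∈ q)
    {x : A ⊗[R] M} (hx : x ∈ p.baseChange A) : f.baseChange A x ∈ q.baseChange A := by
  obtain ⟨y, rfl⟩ := hx
  refine ⟨(f.restrict hf).baseChange A y, ?_⟩
  rw [← LinearMap.comp_apply, ← LinearMap.baseChange_comp, ← LinearMap.comp_apply,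
    ← LinearMap.baseChange_comp]
  rfl

section Coordinates

variable {R A M ι : Type*} [CommRing R] [CommRing A] [Algebra R A] [AddCommGroup M] [Module R M]
  [DecidableEq ι] (ℬ : Module.Basis ι R A)

theorem TensorProduct.equivFinsuppOfBasisLeft_lTensor {N : Type*} [AddCommGroup N] [Module R N]
    (f : M →ₗ[R] N) (x : A ⊗[R] M) (i : ι) :
    equivFinsuppOfBasisLeft ℬ (f.lTensor A x) i = f (equivFinsuppOfBasisLeft ℬ x i) := by
  induction x with
  | zero => simp
  | tmul c m => simp
  | add x y hx hy => simp [hx, hy]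

theorem Submodule.mem_baseChange_iff_equivFinsuppOfBasisLeft_mem {p : Submodule R M}
    {x : A ⊗[R] M} : x ∈ p.baseChange A ↔ ∀ i, equivFinsuppOfBasisLeft ℬ x i ∈ p := by
  refine ⟨?_, fun h => ?_⟩
  · rintro ⟨y, rfl⟩ i
    rw [LinearMap.baseChange_eq_ltensor, equivFinsuppOfBasisLeft_lTensor]
    exact (equivFinsuppOfBasisLeft ℬ y i).2
  · rw [← (equivFinsuppOfBasisLeft ℬ).symm_apply_apply x, equivFinsuppOfBasisLeft_symm_apply]
    exact Submodule.finsuppSum_mem _ _ _ _ fun i _ => tmul_mem_baseChange_of_mem _ (h i)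

end Coordinates

theorem Submodule.one_tmul_mem_baseChange_iff {R A M : Type*} [CommRing R] [Ring A] [Algebra R A]
    [Module.FaithfullyFlat R A] [AddCommGroup M] [Module R M] {p : Submodule R M} {m : M} :
    (1 : A) ⊗ₜ[R] m ∈ p.baseChange A ↔ m ∈ p := by
  simpa [Submodule.span_singleton_le_iff_mem] using
    Submodule.baseChange_le_iff (A := A) (p := Submodule.span R {m}) (q := p)

theorem Subalgebra.toSubmodule_baseChange {R A B : Type*} [CommRing R] [Ring A] [Algebra R A]
    [CommRing B] [Algebra R B] (C : Subalgebra R A) :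
    Subalgebra.toSubmodule (C.baseChange B) = (Subalgebra.toSubmodule C).baseChange B := rfl

theorem generatedInDegreesLE_baseChange_top {F A : Type*} (k : Type*) [CommRing F] [CommRing k]
    [Algebra F k] [CommRing A] [Algebra F A] {𝒜 : ℕ → Submodule F A} (h𝒜 : (1 : A) ∈ 𝒜 0)
    {n : ℕ} (h : GeneratedInDegreesLE (fun d => (𝒜 d : Set A)) ⊤ n) :
    GeneratedInDegreesLE (fun d => ((𝒜 d).baseChange k : Set (k ⊗[F] A))) ⊤ n := by
  set C := Subring.closure {x | x ∈ (⊤ : Subring (k ⊗[F] A)) ∧ ∃ d ≤ n, x ∈ (𝒜 d).baseChange k}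
  have hleft (c : k) : c ⊗ₜ[F] (1 : A) ∈ C :=
    Subring.subset_closure ⟨trivial, 0, n.zero_le, Submodule.tmul_mem_baseChange_of_mem c h𝒜⟩
  have hright (a : A) : (1 : k) ⊗ₜ[F] a ∈ C := by
    refine (Subring.closure_le (t := C.comap Algebra.TensorProduct.includeRight.toRingHom)).2 ?_
      (h trivial)
    rintro a ⟨-, d, hd, had⟩
    exact Subring.subset_closure ⟨trivial, d, hd, Submodule.tmul_mem_baseChange_of_mem 1 had⟩
  rintro x -
  change x ∈ C
  induction x with
  | zero => exact zero_mem C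
  | tmul c a =>
    simpa only [Algebra.TensorProduct.tmul_mul_tmul, mul_one, one_mul] using
      mul_mem (hleft c) (hright a)
  | add x y hx hy => exact add_mem hx hy

namespace GradedAlgebraWithAction

variable {F : Type} (k : Type) {G : Type} [CommRing k] [Group G]

section RestrictScalars

variable (F) [CommRing F] [Algebra F k]

noncomputable def restrictScalars (X : GradedAlgebraWithAction k G) :
    GradedAlgebraWithAction F G :=
  letI : Algebra F X.carrier := Algebra.compHom X.carrier (algebraMap F k)
  haveI : IsScalarTower F k X.carrier := IsScalarTower.of_compHom F k X.carrier
  haveI := X.graded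
  { carrier := X.carrier
    grading := fun d => (X.grading d).restrictScalars F
    graded := inferInstance
    action := (AlgEquiv.restrictScalarsHom F).comp X.action
    degPres := X.degPres }

theorem betaTop_restrictScalars (X : GradedAlgebraWithAction k G) :
    (X.restrictScalars F).betaTop = X.betaTop := rfl

theorem betaInv_restrictScalars (X : GradedAlgebraWithAction k G) :
    (X.restrictScalars F).betaInv = X.betaInv := rfl

end RestrictScalars

noncomputable def baseChange [CommRing F] [Algebra F k] (X : GradedAlgebraWithAction F G) :
    GradedAlgebraWithAction k G :=
  haveI := X.graded
  { carrier := k ⊗[F] X.carrier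
    grading := fun d => (X.grading d).baseChange k
    graded := inferInstance
    action :=
      { toFun := fun g => Algebra.TensorProduct.congr AlgEquiv.refl (X.action g)
        map_one' := by rw [map_one]; exact Algebra.TensorProduct.congr_refl
        map_mul' := fun g h => by
          rw [map_mul]
          exact Algebra.TensorProduct.congr_trans AlgEquiv.refl AlgEquiv.refl
            (X.action h) (X.action g) }
    degPres := fun g d _ hx =>
      LinearMap.baseChange_apply_mem_baseChange (f := (X.action g).toLinearMap) (X.degPres g d) hx }

theorem betaTop_baseChange_le_one [CommRing F] [Algebra F k] (X : GradedAlgebraWithAction F G)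
    (hX : X.betaTop ≤ 1) : (X.baseChange k).betaTop ≤ 1 := by
  have := X.graded
  rw [betaTop, ← Nat.cast_one, beta_le_coe_iff] at hX ⊢
  exact generatedInDegreesLE_baseChange_top k (SetLike.one_mem_graded X.grading) hX

theorem mem_baseChange_span_inv_of_mem_inv [Field F] [Algebra F k]
    (X : GradedAlgebraWithAction F G) {d : ℕ} {x : k ⊗[F] X.carrier}
    (hx : x ∈ (X.baseChange k).inv) (hxd : x ∈ (X.grading d).baseChange k) :
    x ∈ (Submodule.span F {a | a ∈ X.inv ∧ a ∈ X.grading d}).baseChange k := by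
  classical
  let ℬ := Module.Free.chooseBasis F k
  rw [Submodule.mem_baseChange_iff_equivFinsuppOfBasisLeft_mem ℬ] at hxd ⊢
  refine fun i => Submodule.subset_span ⟨fun g => ?_, hxd i⟩
  have h := congrArg (fun y => equivFinsuppOfBasisLeft ℬ y i) (hx g)
  -- the action on `k ⊗[F] A` is `lTensor` of the action on `A`, so it commutes with coordinates
  change equivFinsuppOfBasisLeft ℬ ((X.action g).toLinearMap.lTensor k x) i = _ at h
  rwa [equivFinsuppOfBasisLeft_lTensor] at h

theorem betaInv_le_betaInv_baseChange [Field F] [Algebra F k] [Nontrivial k]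
    (X : GradedAlgebraWithAction F G) : X.betaInv ≤ (X.baseChange k).betaInv := by
  refine beta_le_beta fun n hn b hb => ?_
  set S := {a | a ∈ X.inv ∧ ∃ d ≤ n, a ∈ (X.grading d : Set X.carrier)}
  have hclosure : Subring.closure S = (Algebra.adjoin F S).toSubring := by
    have := X.graded
    rw [Algebra.adjoin_eq_ring_closure, Set.union_eq_self_of_subset_left]
    rintro _ ⟨c, rfl⟩
    exact ⟨fun g => (X.action g).commutes c, 0, n.zero_le,
      SetLike.algebraMap_mem_graded X.grading c⟩
  have hgen : (1 : k) ⊗ₜ[F] b ∈ Subring.closure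
      {x | x ∈ (X.baseChange k).inv ∧ ∃ d ≤ n, x ∈ ((X.baseChange k).grading d : Set _)} :=
    hn fun g => congrArg ((1 : k) ⊗ₜ[F] ·) (hb g)
  have hmem : (1 : k) ⊗ₜ[F] b ∈ (Algebra.adjoin F S).baseChange k := by
    refine (Subring.closure_le (t := ((Algebra.adjoin F S).baseChange k).toSubring)).2 ?_ hgen
    rintro x ⟨hx, d, hd, hxd⟩
    change x ∈ Subalgebra.toSubmodule ((Algebra.adjoin F S).baseChange k)
    rw [Subalgebra.toSubmodule_baseChange]
    refine Submodule.baseChange_mono k ?_ (mem_baseChange_span_inv_of_mem_inv k X hx hxd)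
    exact Submodule.span_le.2 fun a ⟨ha, had⟩ => Algebra.subset_adjoin ⟨ha, d, hd, had⟩
  rw [← Subalgebra.mem_toSubmodule, Subalgebra.toSubmodule_baseChange,
    Submodule.one_tmul_mem_baseChange_iff] at hmem
  change b ∈ Subring.closure S
  rwa [hclosure]

end GradedAlgebraWithAction

theorem betaRing_le_betaRing_of_algebra (F k G : Type) [CommRing F] [CommRing k] [Algebra F k]
    [Group G] : betaRing k G ≤ betaRing F G :=
  iSup₂_le fun X hX =>
    le_iSup₂_of_le (f := fun (Y : GradedAlgebraWithAction F G) (_ : Y.betaTop ≤ 1) => Y.betaInv)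
      (X.restrictScalars F) ((X.betaTop_restrictScalars F).trans_le hX)
      (X.betaInv_restrictScalars F).ge

theorem betaRing_eq_betaRing_of_algebra (F k G : Type) [Field F] [CommRing k] [Nontrivial k]
    [Algebra F k] [Group G] : betaRing k G = betaRing F G :=
  le_antisymm (betaRing_le_betaRing_of_algebra F k G) <| iSup₂_le fun X hX =>
    (X.betaInv_le_betaInv_baseChange k).trans <|
      le_iSup₂_of_le (f := fun (Y : GradedAlgebraWithAction k G) (_ : Y.betaTop ≤ 1) => Y.betaInv)
        (X.baseChange k) (X.betaTop_baseChange_le_one k hX) le_rfl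

theorem betaRing_eq_of_ringChar_eq_general (k K G : Type) [Field k] [Field K] [Group G]
    (hchar : ringChar k = ringChar K) :
    betaRing k G = betaRing K G := by
  obtain hp | h0 := CharP.char_is_prime_or_zero k (ringChar k)
  · have : Fact (ringChar k).Prime := ⟨hp⟩
    have : CharP K (ringChar k) := hchar ▸ ringChar.charP K
    let := ZMod.algebra k (ringChar k)
    let := ZMod.algebra K (ringChar k)
    rw [betaRing_eq_betaRing_of_algebra (ZMod (ringChar k)) k,
      betaRing_eq_betaRing_of_algebra (ZMod (ringChar k)) K]
  · have : CharZero k := (CharP.ringChar_zero_iff_CharZero k).1 h0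
    have : CharZero K := (CharP.ringChar_zero_iff_CharZero K).1 (hchar ▸ h0)
    rw [betaRing_eq_betaRing_of_algebra ℚ k, betaRing_eq_betaRing_of_algebra ℚ K]

/-- For a finite group `G`, the invariant `β_k(G)` for fields `k`
depends only on the characteristic of `k`: if `k` and `K` are fields of the same
characteristic then `β_k(G) = β_K(G)`. -/
theorem betaRing_eq_of_ringChar_eq (k K G : Type) [Field k] [Field K] [Group G]
    [Finite G] (hchar : ringChar k = ringChar K) :
    betaRing k G = betaRing K G :=
  betaRing_eq_of_ringChar_eq_general k K G hchar
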